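/- arXiv:1111.4866 — 3 statements merged into one kernel-verified Lean document; each statement's English description precedes it below -/
import Mathlib

section
/- Let n ≥ 2 and define γ(E) = max_{y ∈ ℝⁿ} ∫_E (1/|x−y|) dx for measurable E ⊂ B_{R₀}. If E_k, E ⊂ B_{R₀} are measurable sets with χ_{E_k} → χ_E in L¹, then γ(E_k) → γ(E). -/
open MeasureTheory Metric Set
open scoped ENNReal MeasureTheory RealInnerProductSpace

/-- Euclidean space ℝⁿ. -/
abbrev V (n : ℕ) := EuclideanSpace ℝ (Fin n)

/-- Divergence of a vector field on ℝⁿ. -/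
noncomputable def vdiv {n : ℕ} (φ : V n → V n) (x : V n) : ℝ :=
  ∑ i, fderiv ℝ φ x (EuclideanSpace.single i 1) i

/-- The admissible values in the variational definition of the relative perimeter
of `F` in the open set `U`. -/
def perSet {n : ℕ} (F U : Set (V n)) : Set ℝ :=
  {a | ∃ φ : V n → V n, ContDiff ℝ 1 φ ∧ HasCompactSupport φ ∧
    (∀ x, ‖φ x‖ ≤ 1) ∧ tsupport φ ⊆ U ∧ a = ∫ x in F, vdiv φ x}

/-- Relative perimeter of `F` in `U` (De Giorgi's variational definition). -/
noncomputable def perimeterIn {n : ℕ} (F U : Set (V n)) : ℝ := sSup (perSet F U)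

/-- Perimeter of `F` in all of ℝⁿ. -/
noncomputable def perimeter {n : ℕ} (F : Set (V n)) : ℝ := perimeterIn F univ

/-- `F` is a set of finite perimeter. -/
def HasFinitePerimeter {n : ℕ} (F : Set (V n)) : Prop :=
  MeasurableSet F ∧ BddAbove (perSet F univ)

/-- ω_n, the volume of the unit ball of ℝⁿ. -/
noncomputable def unitBallVol (n : ℕ) : ℝ := (volume (ball (0 : V n) 1)).toReal

/-- γ(E) = sup over y of ∫_E |x−y|⁻¹ dx. -/
noncomputable def gammaFn {n : ℕ} (E : Set (V n)) : ℝ :=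
  sSup {b | ∃ y : V n, b = ∫ x in E, ‖x - y‖⁻¹}

/-! The kernel `‖x - y‖⁻¹` is locally integrable once the dimension is at least two, and away
from its pole it is at most `r⁻¹`. Splitting at radius `r`, the mass of `‖x - y‖⁻¹` on a set `S`
is at most `∫_{B_r(0)} ‖x‖⁻¹ + |S| / r`, uniformly in `y`; choosing `r` and then `|S|` small makes
it small. Since `∫_A ≤ ∫_B + ∫_{A \ B}` for every `y`, taking suprema gives
`|γ(A) - γ(B)| ≤ sup_y ∫_{A ∆ B} ‖x - y‖⁻¹`, which tends to `0` when `|Eₖ ∆ E| → 0`. -/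

open Filter Topology

section InverseNorm

variable {E : Type*} [NormedAddCommGroup E] [NormedSpace ℝ E] [FiniteDimensional ℝ E]
  [MeasurableSpace E] [BorelSpace E] {μ : Measure E} [μ.IsAddHaarMeasure]

theorem locallyIntegrable_inv_norm (hE : 1 < Module.finrank ℝ E) :
    LocallyIntegrable (fun x : E => ‖x‖⁻¹) μ := by
  refine locallyIntegrable_of_norm_le_rpow (C := 1) (α := 1) hE.le (by exact_mod_cast hE)
    (Eventually.of_forall fun x => ?_) measurable_norm.inv.aestronglyMeasurable
  simp [Real.rpow_neg_one]

omit [NormedSpace ℝ E] [FiniteDimensional ℝ E] [MeasurableSpace E] [BorelSpace E] in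
theorem inv_norm_le_indicator_add (x : E) {r : ℝ} (hr : 0 < r) :
    ‖x‖⁻¹ ≤ (ball 0 r).indicator (fun z : E => ‖z‖⁻¹) x + r⁻¹ := by
  by_cases hx : x ∈ ball 0 r
  · simp [indicator_of_mem hx, hr.le]
  · rw [indicator_of_notMem hx, zero_add]
    exact inv_anti₀ hr (by simpa using hx)

theorem integrable_indicator_ball_inv_norm (hE : 1 < Module.finrank ℝ E) (r : ℝ) :
    Integrable ((ball (0 : E) r).indicator fun z => ‖z‖⁻¹) μ :=
  (integrable_indicator_iff measurableSet_ball).2 <|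
    ((locallyIntegrable_inv_norm hE).integrableOn_isCompact (isCompact_closedBall 0 r)).mono_set
      ball_subset_closedBall

theorem integrableOn_inv_norm_sub (hE : 1 < Module.finrank ℝ E) (y : E) {s : Set E}
    (hs : μ s ≠ ∞) : IntegrableOn (fun x => ‖x - y‖⁻¹) s μ := by
  refine Integrable.mono' (g := fun x => (ball 0 1).indicator (fun z : E => ‖z‖⁻¹) (x - y) + 1⁻¹)
    ?_ (measurable_id.sub_const y).norm.inv.aestronglyMeasurable
    (Eventually.of_forall fun x => ?_)
  · exact ((integrable_indicator_ball_inv_norm hE 1).comp_sub_right y).integrableOn.add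
      (integrableOn_const hs)
  · rw [Real.norm_of_nonneg (by positivity)]
    exact inv_norm_le_indicator_add _ one_pos

theorem setIntegral_inv_norm_sub_le (hE : 1 < Module.finrank ℝ E) (y : E) {s : Set E}
    (hs : μ s ≠ ∞) {r : ℝ} (hr : 0 < r) :
    ∫ x in s, ‖x - y‖⁻¹ ∂μ ≤ ∫ x in ball 0 r, ‖x‖⁻¹ ∂μ + r⁻¹ * μ.real s := by
  set g : E → ℝ := (ball 0 r).indicator fun z => ‖z‖⁻¹
  have hg : Integrable (fun x => g (x - y)) μ :=
    (integrable_indicator_ball_inv_norm hE r).comp_sub_right y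
  calc ∫ x in s, ‖x - y‖⁻¹ ∂μ ≤ ∫ x in s, (g (x - y) + r⁻¹) ∂μ :=
        setIntegral_mono (integrableOn_inv_norm_sub hE y hs)
          (hg.integrableOn.add (integrableOn_const hs))
          fun x => inv_norm_le_indicator_add _ hr
    _ = ∫ x in s, g (x - y) ∂μ + r⁻¹ * μ.real s := by
        rw [integral_add hg.integrableOn (integrableOn_const hs), setIntegral_const,
          smul_eq_mul, mul_comm]
    _ ≤ ∫ x, g (x - y) ∂μ + r⁻¹ * μ.real s := by
        grw [setIntegral_le_integral hg (Eventually.of_forall fun x =>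
          indicator_nonneg (fun z _ => inv_nonneg.2 (norm_nonneg z)) _)]
    _ = ∫ x in ball 0 r, ‖x‖⁻¹ ∂μ + r⁻¹ * μ.real s := by
        rw [integral_sub_right_eq_self g y, integral_indicator measurableSet_ball]

theorem tendsto_setIntegral_ball_inv_norm (hE : 1 < Module.finrank ℝ E) :
    Tendsto (fun r => ∫ x in ball 0 r, ‖x‖⁻¹ ∂μ) (𝓝[>] 0) (𝓝 0) := by
  have h_lim (x : E) :
      Tendsto (fun r => (ball (0 : E) r).indicator (fun z => ‖z‖⁻¹) x) (𝓝[>] 0) (𝓝 0) := by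
    rcases eq_or_ne x 0 with rfl | hx
    -- `‖0‖⁻¹ = 0` in Lean, so at the origin the integrand vanishes identically.
    · exact tendsto_const_nhds.congr fun r => (indicator_apply_eq_zero.2 fun _ => by simp).symm
    · refine tendsto_const_nhds.congr' ?_
      filter_upwards [Ioo_mem_nhdsGT (norm_pos_iff.2 hx)] with r hr
      rw [indicator_of_notMem (by simpa using hr.2.le)]
  have h_bound : ∀ᶠ r in 𝓝[>] (0 : ℝ), ∀ x : E,
      ‖(ball (0 : E) r).indicator (fun z => ‖z‖⁻¹) x‖ ≤
        (ball 0 1).indicator (fun z => ‖z‖⁻¹) x := by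
    filter_upwards [Ioo_mem_nhdsGT one_pos] with r hr x
    rw [Real.norm_of_nonneg (indicator_nonneg (fun z _ => inv_nonneg.2 (norm_nonneg z)) _)]
    exact indicator_le_indicator_of_subset (ball_subset_ball hr.2.le)
      (fun z => inv_nonneg.2 (norm_nonneg z)) x
  simpa only [← integral_indicator measurableSet_ball, integral_zero] using
    tendsto_integral_filter_of_dominated_convergence (μ := μ) _
      (Eventually.of_forall fun r =>
        (by fun_prop : Measurable fun z : E => ‖z‖⁻¹).aestronglyMeasurable.indicator
          measurableSet_ball)
      (h_bound.mono fun r hr => ae_of_all _ hr) (integrable_indicator_ball_inv_norm hE 1)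
      (ae_of_all _ h_lim)

theorem exists_pos_forall_setIntegral_inv_norm_sub_le (hE : 1 < Module.finrank ℝ E) {ε : ℝ}
    (hε : 0 < ε) :
    ∃ δ > 0, ∀ s : Set E, μ s < ENNReal.ofReal δ → ∀ y, ∫ x in s, ‖x - y‖⁻¹ ∂μ ≤ ε := by
  obtain ⟨r, hrε, hr⟩ : ∃ r, ∫ x in ball 0 r, ‖x‖⁻¹ ∂μ < ε / 2 ∧ 0 < r :=
    (((tendsto_setIntegral_ball_inv_norm (μ := μ) hE).eventually (gt_mem_nhds (half_pos hε))).and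
      self_mem_nhdsWithin).exists
  refine ⟨r * (ε / 2), by positivity, fun s hs y => ?_⟩
  have hs_real : μ.real s < r * (ε / 2) := ENNReal.toReal_lt_of_lt_ofReal hs
  calc ∫ x in s, ‖x - y‖⁻¹ ∂μ ≤ ∫ x in ball 0 r, ‖x‖⁻¹ ∂μ + r⁻¹ * μ.real s :=
        setIntegral_inv_norm_sub_le hE y (hs.trans ENNReal.ofReal_lt_top).ne hr
    _ ≤ ε / 2 + r⁻¹ * (r * (ε / 2)) := by gcongr
    _ = ε := by field_simp; ring

end InverseNorm

theorem one_lt_finrank_V {n : ℕ} (hn : 2 ≤ n) : 1 < Module.finrank ℝ (V n) := by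
  rw [finrank_euclideanSpace_fin]
  omega

theorem bddAbove_gammaSet {n : ℕ} (hn : 2 ≤ n) {A : Set (V n)} (hA : volume A ≠ ∞) :
    BddAbove {b | ∃ y : V n, b = ∫ x in A, ‖x - y‖⁻¹} := by
  refine ⟨(∫ x in ball (0 : V n) 1, ‖x‖⁻¹) + 1⁻¹ * volume.real A, ?_⟩
  rintro b ⟨y, rfl⟩
  exact setIntegral_inv_norm_sub_le (one_lt_finrank_V hn) y hA one_pos

theorem setIntegral_inv_norm_sub_le_gammaFn {n : ℕ} (hn : 2 ≤ n) {A : Set (V n)}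
    (hA : volume A ≠ ∞) (y : V n) : ∫ x in A, ‖x - y‖⁻¹ ≤ gammaFn A :=
  le_csSup (bddAbove_gammaSet hn hA) ⟨y, rfl⟩

theorem gammaFn_le_add {n : ℕ} (hn : 2 ≤ n) {A B : Set (V n)} (hA : volume A ≠ ∞)
    (hB : MeasurableSet B) (hB' : volume B ≠ ∞) {c : ℝ}
    (hc : ∀ y, ∫ x in A \ B, ‖x - y‖⁻¹ ≤ c) : gammaFn A ≤ gammaFn B + c := by
  refine csSup_le ⟨_, 0, rfl⟩ ?_
  rintro b ⟨y, rfl⟩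
  have hn' : 1 < Module.finrank ℝ (V n) := one_lt_finrank_V hn
  calc ∫ x in A, ‖x - y‖⁻¹
      = (∫ x in A ∩ B, ‖x - y‖⁻¹) + ∫ x in A \ B, ‖x - y‖⁻¹ :=
        (integral_inter_add_sdiff hB (integrableOn_inv_norm_sub hn' y hA)).symm
    _ ≤ (∫ x in B, ‖x - y‖⁻¹) + c :=
        add_le_add (setIntegral_mono_set (integrableOn_inv_norm_sub hn' y hB')
          (Eventually.of_forall fun x => inv_nonneg.2 (norm_nonneg _))
          inter_subset_right.eventuallyLE) (hc y)
    _ ≤ gammaFn B + c := by gcongr; exact setIntegral_inv_norm_sub_le_gammaFn hn hB' y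

theorem abs_gammaFn_sub_le {n : ℕ} (hn : 2 ≤ n) {A B : Set (V n)}
    (hA : MeasurableSet A) (hA' : volume A ≠ ∞) (hB : MeasurableSet B) (hB' : volume B ≠ ∞)
    {c : ℝ} (hc : ∀ y, ∫ x in symmDiff A B, ‖x - y‖⁻¹ ≤ c) :
    |gammaFn A - gammaFn B| ≤ c := by
  have hΔ : volume (symmDiff A B) ≠ ∞ := measure_symmDiff_ne_top hA' hB'
  have h_diff {S : Set (V n)} (hST : S ⊆ symmDiff A B) (y : V n) :
      ∫ x in S, ‖x - y‖⁻¹ ≤ c :=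
    (setIntegral_mono_set (integrableOn_inv_norm_sub (one_lt_finrank_V hn) y hΔ)
      (Eventually.of_forall fun x => inv_nonneg.2 (norm_nonneg _)) hST.eventuallyLE).trans (hc y)
  have h₁ := gammaFn_le_add hn hA' hB hB' (h_diff fun _ => Or.inl)
  have h₂ := gammaFn_le_add hn hB' hA hA' (h_diff fun _ => Or.inr)
  exact abs_sub_le_iff.2 ⟨by linarith, by linarith⟩

theorem stmt6_general (n : ℕ) (hn : 2 ≤ n) (R₀ : ℝ)
    (Ek : ℕ → Set (V n)) (E : Set (V n))
    (hEk : ∀ k, MeasurableSet (Ek k) ∧ Ek k ⊆ ball 0 R₀)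
    (hE : MeasurableSet E) (hE' : E ⊆ ball 0 R₀)
    (hconv : Filter.Tendsto (fun k => volume (symmDiff (Ek k) E)) Filter.atTop (nhds 0)) :
    Filter.Tendsto (fun k => gammaFn (Ek k)) Filter.atTop (nhds (gammaFn E)) := by
  have hfin {A : Set (V n)} (hA : A ⊆ ball 0 R₀) : volume A ≠ ∞ :=
    (measure_mono hA).trans_lt measure_ball_lt_top |>.ne
  rw [Metric.tendsto_atTop]
  intro ε hε
  obtain ⟨δ, hδ, hsmall⟩ :=
    exists_pos_forall_setIntegral_inv_norm_sub_le (μ := volume) (one_lt_finrank_V hn) (half_pos hε)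
  obtain ⟨N, hN⟩ := eventually_atTop.1 (hconv.eventually (gt_mem_nhds (ENNReal.ofReal_pos.2 hδ)))
  refine ⟨N, fun k hk => ?_⟩
  calc dist (gammaFn (Ek k)) (gammaFn E) ≤ ε / 2 :=
        abs_gammaFn_sub_le hn (hEk k).1 (hfin (hEk k).2) hE (hfin hE') (hsmall _ (hN k hk))
    _ < ε := half_lt_self hε

theorem stmt6 (n : ℕ) (hn : 2 ≤ n) (R₀ : ℝ) (hR : 0 < R₀)
    (Ek : ℕ → Set (V n)) (E : Set (V n))
    (hEk : ∀ k, MeasurableSet (Ek k) ∧ Ek k ⊆ ball 0 R₀)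
    (hE : MeasurableSet E) (hE' : E ⊆ ball 0 R₀)
    (hconv : Filter.Tendsto (fun k => volume (symmDiff (Ek k) E)) Filter.atTop (nhds 0)) :
    Filter.Tendsto (fun k => gammaFn (Ek k)) Filter.atTop (nhds (gammaFn E)) :=
  stmt6_general n hn R₀ Ek E hEk hE hE' hconv
end

section
/- Let n ≥ 2 and R₀ > 0. For every ε > 0 there exists δ > 0 such that if F ⊂ B_{R₀} is a bounded measurable set with |F Δ B₁| < δ, then every point y_F achieving max_{y} ∫_F |x−y|^{−1} dx satisfies |y_F| < ε. -/
/-!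
Write `P_A(y) = ∫_A |x - y|⁻¹ dx`. Since `|x|⁻¹` is integrable near `0` when `n ≥ 2`, `P_D(y)` is
small uniformly in `y` once `|D|` is small, so `P_F` stays uniformly close to `P_{B₁}` when
`|F Δ B₁|` is small. On the other hand `P_{B₁}(y) = P_{B₁(-y)}(0)`, and trading
`B₁(-y) \ B₁`, where `|x|⁻¹ ≤ 1`, for the equally large `B₁ \ B₁(-y)`, where `|x|⁻¹ ≥ 1`, raises
the potential at `0` (bathtub principle). When `|y| ≥ ε` the second set contains a ball of radius
`≈ ε` on which `|x|⁻¹ ≥ 1 + c`, so `P_{B₁}(y) + γ ≤ P_{B₁}(0)` with `γ > 0` depending only on `ε`.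
A maximiser `y_F` of `P_F` thus has `P_{B₁}(y_F) ≥ P_{B₁}(0) - 2 sup P_D`, forcing `|y_F| < ε`.
-/

open MeasureTheory Metric Set
open scoped ENNReal MeasureTheory RealInnerProductSpace

open Module

theorem exists_ball_subset_ball_sdiff_ball {E : Type*} [NormedAddCommGroup E] [NormedSpace ℝ E]
    {y : E} {t : ℝ} (ht : 0 < t) (ht1 : 2 * t ≤ 1) (hy : 3 * t ≤ ‖y‖) :
    ∃ z, ball z t ⊆ ball 0 (1 - t) \ ball (-y) 1 := by
  have hy0 : 0 < ‖y‖ := by linarith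
  set s := (1 - 2 * t) / ‖y‖
  have hs : 0 ≤ s := div_nonneg (by linarith) hy0.le
  have hz : ‖s • y‖ = 1 - 2 * t := by
    rw [norm_smul, Real.norm_of_nonneg hs, div_mul_cancel₀ _ hy0.ne']
  have hzy : ‖s • y + y‖ = 1 - 2 * t + ‖y‖ := by
    rw [show s • y + y = (s + 1) • y by module, norm_smul, Real.norm_of_nonneg (by linarith),
      add_mul, div_mul_cancel₀ _ hy0.ne', one_mul]
  refine ⟨s • y, fun x hx => ⟨?_, fun hx' => ?_⟩⟩
  · rw [mem_ball_iff_norm] at hx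
    rw [mem_ball_zero_iff]
    linarith [norm_le_norm_add_norm_sub' x (s • y)]
  · rw [mem_ball_iff_norm] at hx hx'
    rw [sub_neg_eq_add] at hx'
    have := norm_add_le (s • y - x) (x + y)
    rw [show s • y - x + (x + y) = s • y + y by abel, norm_sub_rev] at this
    linarith

section Potential

variable {E : Type*} [NormedAddCommGroup E] [MeasurableSpace E] (μ : Measure E)

/-- `∫_A |x - y|⁻¹ dx` as a lower integral, so that it never takes the junk value of a
Bochner integral. -/
noncomputable def potential (A : Set E) (y : E) : ℝ≥0∞ :=
  ∫⁻ x in A, ENNReal.ofReal ‖x - y‖⁻¹ ∂μ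

theorem potential_mono {A B : Set E} (h : A ⊆ B) (y : E) : potential μ A y ≤ potential μ B y :=
  lintegral_mono_set h

theorem potential_le_add_symmDiff (A B : Set E) (y : E) :
    potential μ A y ≤ potential μ B y + potential μ (symmDiff A B) y := by
  refine (potential_mono μ (fun x hx => ?_) y).trans (lintegral_union_le _ B (symmDiff A B))
  by_cases hB : x ∈ B
  · exact Or.inl hB
  · exact Or.inr (Or.inl ⟨hx, hB⟩)

theorem integral_inv_norm_sub_eq_toReal_potential [OpensMeasurableSpace E] (A : Set E) (y : E) :
    ∫ x in A, ‖x - y‖⁻¹ ∂μ = (potential μ A y).toReal :=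
  integral_eq_lintegral_of_nonneg_ae (ae_of_all _ fun _ => inv_nonneg.2 (norm_nonneg _))
    (continuous_id.sub continuous_const).norm.measurable.inv.aestronglyMeasurable

theorem potential_zero_le [OpensMeasurableSpace E] (A : Set E) :
    potential μ A 0 ≤
      ∫⁻ x in A, (ball 0 1).indicator (fun x => ENNReal.ofReal ‖x‖⁻¹) x ∂μ + μ A := by
  rw [← setLIntegral_one, ← lintegral_add_right _ measurable_const]
  refine lintegral_mono fun x => ?_
  by_cases hx : x ∈ ball (0 : E) 1
  · simp [indicator_of_mem hx]
  · simpa [indicator_of_notMem hx] using inv_le_one_of_one_le₀ (by simpa using hx)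

variable [BorelSpace E] [μ.IsAddHaarMeasure]

theorem potential_eq_potential_preimage_add (A : Set E) (y : E) :
    potential μ A y = potential μ ((· + y) ⁻¹' A) 0 := by
  rw [potential, ← (measurePreserving_add_right μ y).setLIntegral_comp_preimage_emb
    (measurableEmbedding_addRight y)]
  simp [potential]

variable [NormedSpace ℝ E] [FiniteDimensional ℝ E]

theorem lintegral_indicator_ball_inv_norm_ne_top (hE : 1 < finrank ℝ E) :
    ∫⁻ x, (ball 0 1).indicator (fun x => ENNReal.ofReal ‖x‖⁻¹) x ∂μ ≠ ∞ := by
  rw [lintegral_indicator measurableSet_ball]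
  refine (IntegrableOn.setLIntegral_lt_top ?_).ne
  refine integrableOn_ball_of_norm_le_rpow (C := 1) (α := 1) hE.le (by exact_mod_cast hE)
    (ae_of_all _ fun x => ?_) continuous_norm.measurable.inv.aestronglyMeasurable
  simp [Real.rpow_neg_one]

theorem potential_ne_top (hE : 1 < finrank ℝ E) {A : Set E} (hA : μ A ≠ ∞) (y : E) :
    potential μ A y ≠ ∞ := by
  rw [potential_eq_potential_preimage_add]
  refine ne_top_of_le_ne_top ?_ (potential_zero_le μ _)
  rw [measure_preimage_add_right]
  exact ENNReal.add_ne_top.2 ⟨ne_top_of_le_ne_top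
    (lintegral_indicator_ball_inv_norm_ne_top μ hE) (setLIntegral_le_lintegral _ _), hA⟩

theorem exists_pos_forall_potential_lt (hE : 1 < finrank ℝ E) {η : ℝ≥0∞} (hη : η ≠ 0) :
    ∃ δ > 0, ∀ (A : Set E) (y : E), μ A < δ → potential μ A y < η := by
  obtain ⟨δ, hδ, hδη⟩ := exists_pos_setLIntegral_lt_of_measure_lt
    (lintegral_indicator_ball_inv_norm_ne_top μ hE) (ENNReal.half_pos hη).ne'
  refine ⟨min δ (η / 2), lt_min hδ (ENNReal.half_pos hη), fun A y hA => ?_⟩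
  have hA' : μ ((· + y) ⁻¹' A) < min δ (η / 2) := by rwa [measure_preimage_add_right]
  rw [potential_eq_potential_preimage_add]
  calc potential μ ((· + y) ⁻¹' A) 0
      ≤ ∫⁻ x in (· + y) ⁻¹' A, (ball 0 1).indicator (fun x => ENNReal.ofReal ‖x‖⁻¹) x ∂μ
          + μ ((· + y) ⁻¹' A) := potential_zero_le μ _
    _ < η / 2 + η / 2 := by
        gcongr
        · exact hδη _ (hA'.trans_le (min_le_left _ _))
        · exact hA'.trans_le (min_le_right _ _)
    _ = η := ENNReal.add_halves η

theorem potential_add_le_potential_ball [NullSingletonClass μ] {S Z : Set E} {r : ℝ}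
    (hS : MeasurableSet S) (hSμ : μ S = μ (ball 0 1)) (hr : r ≤ 1)
    (hZ : MeasurableSet Z) (hZS : Z ⊆ ball 0 r \ S) :
    potential μ S 0 + ENNReal.ofReal (r⁻¹ - 1) * μ Z ≤ potential μ (ball 0 1) 0 := by
  set B : Set E := ball 0 1
  set c := ENNReal.ofReal (r⁻¹ - 1)
  have hZB : Z ⊆ B \ S := hZS.trans (sdiff_subset_sdiff_left (ball_subset_ball hr))
  have h_out : ∫⁻ x in S \ B, ENNReal.ofReal ‖x‖⁻¹ ∂μ ≤ μ (S \ B) := by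
    rw [← setLIntegral_one]
    exact setLIntegral_mono' (hS.diff measurableSet_ball) fun x hx =>
      ENNReal.ofReal_le_one.2 (inv_le_one_of_one_le₀ (by simpa [B] using hx.2))
  have h_in : μ (B \ S) + c * μ Z ≤ ∫⁻ x in B \ S, ENNReal.ofReal ‖x‖⁻¹ ∂μ := by
    have hind : ∫⁻ x in B \ S, Z.indicator (fun _ => c) x ∂μ = c * μ Z := by
      rw [setLIntegral_indicator hZ, inter_eq_left.2 hZB, setLIntegral_const]
    rw [← setLIntegral_one, ← hind, ← lintegral_add_left measurable_const]
    refine lintegral_mono_ae ?_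
    filter_upwards [ae_restrict_mem (measurableSet_ball.diff hS),
      ae_restrict_of_ae (μ.ae_ne 0)] with x hxB hx0
    -- the origin is discarded because of the junk value `‖0‖⁻¹ = 0`
    have hx : 0 < ‖x‖ := norm_pos_iff.2 hx0
    by_cases hxZ : x ∈ Z
    · have hxr : ‖x‖ < r := by simpa using (hZS hxZ).1
      rw [indicator_of_mem hxZ, ← ENNReal.ofReal_one, ← ENNReal.ofReal_add zero_le_one
        (sub_nonneg.2 (one_le_inv₀ (hx.trans hxr) |>.2 hr)), add_sub_cancel]
      exact ENNReal.ofReal_le_ofReal (inv_anti₀ hx hxr.le)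
    · rw [indicator_of_notMem hxZ, add_zero]
      have hx1 : ‖x‖ < 1 := by simpa [B] using hxB.1
      exact ENNReal.one_le_ofReal.2 ((one_le_inv₀ hx).2 hx1.le)
  have h_sdiff : μ (S \ B) = μ (B \ S) := measure_sdiff_symm hS.nullMeasurableSet
    measurableSet_ball.nullMeasurableSet hSμ (measure_ne_top_of_subset inter_subset_right
      measure_ball_lt_top.ne)
  simp only [potential, sub_zero]
  rw [← lintegral_inter_add_sdiff _ S measurableSet_ball,
    ← lintegral_inter_add_sdiff _ B hS, inter_comm, add_assoc]
  gcongr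
  exact (add_le_add_left (h_out.trans h_sdiff.le) _).trans h_in

theorem exists_forall_potential_ball_add_le [NullSingletonClass μ] {ε : ℝ} (hε : 0 < ε) :
    ∃ γ ≠ 0, ∀ y : E, ε ≤ ‖y‖ → potential μ (ball 0 1) y + γ ≤ potential μ (ball 0 1) 0 := by
  set t := min ε 1 / 3
  have ht : 0 < t := by positivity
  have ht1 : t ≤ 1 / 3 := by simp only [t]; gcongr; exact min_le_right _ _
  have htε : 3 * t ≤ ε := by simp only [t]; linarith [min_le_left ε 1]
  refine ⟨ENNReal.ofReal ((1 - t)⁻¹ - 1) * μ (ball 0 t), mul_ne_zero ?_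
    (measure_ball_pos μ 0 ht).ne', fun y hy => ?_⟩
  · rw [ne_eq, ENNReal.ofReal_eq_zero, not_le, sub_pos]
    exact one_lt_inv₀ (by linarith) |>.2 (by linarith)
  obtain ⟨z, hz⟩ := exists_ball_subset_ball_sdiff_ball ht (by linarith) (htε.trans hy)
  rw [potential_eq_potential_preimage_add, preimage_add_right_ball, zero_sub,
    ← Measure.addHaar_ball_center μ z t]
  exact potential_add_le_potential_ball μ measurableSet_ball
    (Measure.addHaar_ball_center μ _ 1) (by linarith) measurableSet_ball hz

end Potential

theorem stmt11_general (n : ℕ) (hn : 2 ≤ n) (R₀ : ℝ) (ε : ℝ) (hε : 0 < ε) :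
    ∃ δ > (0 : ℝ), ∀ F : Set (V n), MeasurableSet F → F ⊆ ball 0 R₀ →
      (volume (symmDiff F (ball 0 1))).toReal < δ →
      ∀ yF : V n, (∀ y : V n, (∫ x in F, ‖x - y‖⁻¹) ≤ ∫ x in F, ‖x - yF‖⁻¹) →
        ‖yF‖ < ε := by
  have hE : 1 < finrank ℝ (V n) := by rw [finrank_euclideanSpace_fin]; omega
  have : Nontrivial (V n) := Module.nontrivial_of_finrank_pos (R := ℝ) (zero_lt_one.trans hE)
  obtain ⟨γ, hγ, hgap⟩ := exists_forall_potential_ball_add_le (volume : Measure (V n)) hε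
  obtain ⟨δ₀, hδ₀, hsmall⟩ := exists_pos_forall_potential_lt volume hE (ENNReal.half_pos hγ).ne'
  obtain ⟨δ, -, hδ, hδδ₀⟩ := ENNReal.lt_iff_exists_real_btwn.1 hδ₀
  refine ⟨δ, ENNReal.ofReal_pos.1 hδ, fun F hF hFR hFδ yF hmax => ?_⟩
  by_contra! hy
  set B : Set (V n) := ball 0 1
  have hFfin : volume F ≠ ∞ := measure_ne_top_of_subset hFR measure_ball_lt_top.ne
  have hD : volume (symmDiff F B) < δ₀ := by
    refine ((ENNReal.lt_ofReal_iff_toReal_lt ?_).2 hFδ).trans hδδ₀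
    exact measure_ne_top_of_subset symmDiff_le_sup
      (measure_union_ne_top hFfin measure_ball_lt_top.ne)
  have hFmax : potential volume F 0 ≤ potential volume F yF := by
    have := hmax 0
    rwa [integral_inv_norm_sub_eq_toReal_potential, integral_inv_norm_sub_eq_toReal_potential,
      ENNReal.toReal_le_toReal (potential_ne_top volume hE hFfin 0)
        (potential_ne_top volume hE hFfin yF)] at this
  have hBfin : potential volume B yF ≠ ∞ := potential_ne_top volume hE measure_ball_lt_top.ne yF
  refine lt_irrefl (potential volume B yF + γ) ?_
  calc potential volume B yF + γ ≤ potential volume B 0 := hgap yF hy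
    _ ≤ potential volume F 0 + potential volume (symmDiff F B) 0 := by
        rw [symmDiff_comm]; exact potential_le_add_symmDiff volume B F 0
    _ ≤ potential volume B yF + potential volume (symmDiff F B) yF
          + potential volume (symmDiff F B) 0 := by
        gcongr; exact hFmax.trans (potential_le_add_symmDiff volume F B yF)
    _ < potential volume B yF + (γ / 2 + γ / 2) := by
        rw [add_assoc]
        exact ENNReal.add_lt_add_left hBfin (ENNReal.add_lt_add (hsmall _ _ hD) (hsmall _ _ hD))
    _ = potential volume B yF + γ := by rw [ENNReal.add_halves]

theorem stmt11 (n : ℕ) (hn : 2 ≤ n) (R₀ : ℝ) (hR : 0 < R₀) (ε : ℝ) (hε : 0 < ε) :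
    ∃ δ > (0 : ℝ), ∀ F : Set (V n), MeasurableSet F → F ⊆ ball 0 R₀ →
      (volume (symmDiff F (ball 0 1))).toReal < δ →
      ∀ yF : V n, (∀ y : V n, (∫ x in F, ‖x - y‖⁻¹) ≤ ∫ x in F, ‖x - yF‖⁻¹) →
        ‖yF‖ < ε :=
  stmt11_general n hn R₀ ε hε
end

section
/- For every y₀ ∈ ℝⁿ with y₀ ≠ 0 (n ≥ 2), one has ∫_{B₁} (1/|x − y₀|) dx < ∫_{B₁} (1/|x|) dx. Equivalently, the function y ↦ ∫_{B₁} |x − y|^{−1} dx attains its strict maximum uniquely at y = 0. -/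
open MeasureTheory Metric Set
open scoped ENNReal MeasureTheory RealInnerProductSpace

lemma integrableOn_inv_norm_ball {n : ℕ} (hn : 2 ≤ n) (R : ℝ) :
    IntegrableOn (fun x : V n => ‖x‖⁻¹) (ball (0 : V n) R) := by
  have hmeas : Measurable fun x : V n => ‖x‖⁻¹ := measurable_norm.inv
  set μ := (volume : Measure (V n)).restrict (ball (0 : V n) R) with hμ
  refine ⟨hmeas.aestronglyMeasurable, ?_⟩
  rw [hasFiniteIntegral_iff_ofReal (Filter.Eventually.of_forall fun x => by positivity)]
  rw [lintegral_eq_lintegral_meas_le μ (Filter.Eventually.of_forall fun x => by positivity)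
    hmeas.aemeasurable]
  set B1 := (volume : Measure (V n)) (ball (0 : V n) 1) with hB1
  have hdim : Module.finrank ℝ (V n) = n := finrank_euclideanSpace_fin
  have key : ∀ t ∈ Ioi (1:ℝ), μ {a | t ≤ ‖a‖⁻¹} ≤ ENNReal.ofReal (t ^ (-2:ℝ)) * B1 := by
    intro t ht
    have ht0 : (0:ℝ) < t := lt_trans one_pos ht
    have hsub : {a : V n | t ≤ ‖a‖⁻¹} ⊆ closedBall (0 : V n) t⁻¹ := by
      intro a ha
      simp only [mem_setOf_eq] at ha
      rcases eq_or_ne a 0 with rfl | h0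
      · simp [inv_nonneg.mpr ht0.le]
      · have hna : 0 < ‖a‖ := norm_pos_iff.mpr h0
        have : ‖a‖ = (‖a‖⁻¹)⁻¹ := (inv_inv _).symm
        rw [mem_closedBall_zero_iff, this]
        gcongr
    calc μ {a | t ≤ ‖a‖⁻¹} ≤ volume {a : V n | t ≤ ‖a‖⁻¹} := Measure.restrict_le_self _
      _ ≤ volume (closedBall (0 : V n) t⁻¹) := measure_mono hsub
      _ = ENNReal.ofReal (t⁻¹ ^ Module.finrank ℝ (V n)) * B1 :=
          Measure.addHaar_closedBall _ _ (by positivity)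
      _ ≤ ENNReal.ofReal (t ^ (-2:ℝ)) * B1 := by
          gcongr
          rw [hdim]
          have h1 : t⁻¹ ≤ 1 := by
            rw [inv_le_one_iff₀]; right; exact ht.le
          calc t⁻¹ ^ n ≤ t⁻¹ ^ 2 := pow_le_pow_of_le_one (by positivity) h1 hn
            _ = t ^ (-2:ℝ) := by
                rw [Real.rpow_neg ht0.le, Real.rpow_two, inv_pow]
  have hμfin : μ univ < ∞ := by
    rw [hμ, Measure.restrict_apply_univ]
    exact measure_ball_lt_top
  calc (∫⁻ t in Ioi (0:ℝ), μ {a | t ≤ ‖a‖⁻¹})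
      ≤ ∫⁻ t in Ioc (0:ℝ) 1 ∪ Ioi 1, μ {a | t ≤ ‖a‖⁻¹} :=
        lintegral_mono_set Ioi_subset_Ioc_union_Ioi
    _ ≤ (∫⁻ t in Ioc (0:ℝ) 1, μ {a | t ≤ ‖a‖⁻¹}) + ∫⁻ t in Ioi 1, μ {a | t ≤ ‖a‖⁻¹} :=
        lintegral_union_le _ _ _
    _ < ∞ := by
        refine ENNReal.add_lt_top.2 ⟨?_, ?_⟩
        · calc (∫⁻ t in Ioc (0:ℝ) 1, μ {a | t ≤ ‖a‖⁻¹})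
              ≤ ∫⁻ _ in Ioc (0:ℝ) 1, μ univ :=
                lintegral_mono fun t => measure_mono (subset_univ _)
            _ = μ univ * volume (Ioc (0:ℝ) 1) := by rw [setLIntegral_const]
            _ < ∞ := by
                apply ENNReal.mul_lt_top hμfin
                simp [Real.volume_Ioc]
        · calc (∫⁻ t in Ioi (1:ℝ), μ {a | t ≤ ‖a‖⁻¹})
              ≤ ∫⁻ t in Ioi (1:ℝ), ENNReal.ofReal (t ^ (-2:ℝ)) * B1 :=
                setLIntegral_mono' measurableSet_Ioi key
            _ = (∫⁻ t in Ioi (1:ℝ), ENNReal.ofReal (t ^ (-2:ℝ))) * B1 := by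
                rw [lintegral_mul_const' _ _ measure_ball_lt_top.ne]
            _ < ∞ := by
                apply ENNReal.mul_lt_top _ measure_ball_lt_top
                exact (integrableOn_Ioi_rpow_of_lt (by norm_num) one_pos).setLIntegral_lt_top

theorem stmt12 (n : ℕ) (hn : 2 ≤ n) (y₀ : V n) (hy : y₀ ≠ 0) :
    (∫ x in ball (0 : V n) 1, ‖x - y₀‖⁻¹) < ∫ x in ball (0 : V n) 1, ‖x‖⁻¹ := by
  haveI : Nonempty (Fin n) := ⟨⟨0, by omega⟩⟩
  set c : V n := -y₀ with hc
  have hc0 : c ≠ 0 := neg_ne_zero.mpr hy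
  have hcn : (0:ℝ) < ‖c‖ := norm_pos_iff.mpr hc0
  set g : V n → ℝ := fun x => ‖x‖⁻¹ with hg
  -- Step 1 : translation
  have htrans : (∫ x in ball (0 : V n) 1, ‖x - y₀‖⁻¹) = ∫ x in ball c 1, g x := by
    have h := (measurePreserving_add_right (volume : Measure (V n)) y₀).setIntegral_preimage_emb
      (measurableEmbedding_addRight y₀) (fun y => ‖y - y₀‖⁻¹) (ball 0 1)
    rw [← h]
    have hpre : (· + y₀) ⁻¹' ball (0 : V n) 1 = ball c 1 := by
      ext x
      simp [mem_ball, dist_eq_norm, hc, sub_neg_eq_add]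
    rw [hpre]
    simp [hg]
  rw [htrans]
  -- notation
  set B0 := ball (0 : V n) 1 with hB0
  set Bc := ball c 1 with hBc
  set A := B0 \ Bc with hA
  set A' := Bc \ B0 with hA'
  have hB0m : MeasurableSet B0 := measurableSet_ball
  have hBcm : MeasurableSet Bc := measurableSet_ball
  have hAm : MeasurableSet A := hB0m.diff hBcm
  -- integrability of g on relevant sets
  have hball : B0 ∪ Bc ⊆ ball (0 : V n) (‖c‖ + 2) := by
    intro x hx
    rcases hx with hx | hx
    · have := mem_ball_zero_iff.mp hx
      rw [mem_ball_zero_iff]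
      linarith
    · rw [mem_ball_zero_iff]
      have h1 : dist x c < 1 := mem_ball.mp hx
      calc ‖x‖ = dist x 0 := (dist_zero_right x).symm
        _ ≤ dist x c + dist c 0 := dist_triangle _ _ _
        _ < 1 + ‖c‖ := by rw [dist_zero_right]; linarith
        _ ≤ ‖c‖ + 2 := by linarith
  have hIntBig : IntegrableOn g (ball (0 : V n) (‖c‖ + 2)) := integrableOn_inv_norm_ball hn _
  have hIg : ∀ s : Set (V n), s ⊆ B0 ∪ Bc → IntegrableOn g s :=
    fun s hs => hIntBig.mono_set (hs.trans hball)
  -- decomposition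
  have hdec1 : (∫ x in Bc, g x) = (∫ x in Bc ∩ B0, g x) + ∫ x in A', g x :=
    (integral_inter_add_diff hB0m (hIg Bc subset_union_right)).symm
  have hdec2 : (∫ x in B0, g x) = (∫ x in B0 ∩ Bc, g x) + ∫ x in A, g x :=
    (integral_inter_add_diff hBcm (hIg B0 subset_union_left)).symm
  rw [hdec1, hdec2, inter_comm]
  gcongr _ + ?_
  -- Step 3 : reflection x ↦ c - x
  have hrefl : (∫ x in A', g x) = ∫ x in A, ‖c - x‖⁻¹ := by
    have h := (Measure.measurePreserving_sub_left (volume : Measure (V n)) c).setIntegral_preimage_emb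
      (MeasurableEquiv.subLeft c).measurableEmbedding g A'
    rw [← h]
    have hpre : (c - ·) ⁻¹' A' = A := by
      ext x
      simp only [hA', hA, hB0, hBc, mem_preimage, mem_diff, mem_ball, dist_eq_norm, sub_zero,
        sub_sub_cancel_left, norm_neg]
      rw [norm_sub_rev c x]
    rw [hpre]
  rw [hrefl]
  -- key facts on A
  have hA_bd : ∀ x ∈ A, (1:ℝ) ≤ ‖c - x‖ := by
    intro x hx
    have h2 : ¬ dist x c < 1 := by
      intro h; exact hx.2 (mem_ball.mpr h)
    rw [dist_eq_norm] at h2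
    rw [← norm_neg, neg_sub]
    linarith [not_lt.mp h2]
  have hInt1 : IntegrableOn (fun x => ‖c - x‖⁻¹) A := by
    apply Measure.integrableOn_of_bounded (M := 1)
    · exact ((measure_mono (diff_subset.trans (subset_refl B0))).trans_lt
        measure_ball_lt_top).ne
    · exact ((measurable_const.sub measurable_id).norm.inv).aestronglyMeasurable
    · filter_upwards [ae_restrict_mem hAm] with x hx
      have h1 := hA_bd x hx
      rw [Real.norm_eq_abs, abs_of_nonneg (by positivity)]
      rw [inv_le_one_iff₀]
      right; linarith
  have hInt2 : IntegrableOn g A := hIg A (diff_subset.trans subset_union_left)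
  -- positive measure subset of A
  have hposA : 0 < volume A := by
    set ε : ℝ := min (‖c‖ / 4) 4⁻¹ with hε
    have hε0 : 0 < ε := lt_min (by positivity) (by norm_num)
    have hε1 : ε ≤ ‖c‖ / 4 := min_le_left _ _
    have hε2 : ε ≤ 4⁻¹ := min_le_right _ _
    set p : V n := (-(1 - ε) / ‖c‖) • c with hp
    have hpn : ‖p‖ = 1 - ε := by
      rw [hp, norm_smul, Real.norm_eq_abs, abs_div, abs_neg, abs_of_nonneg (by linarith),
        abs_of_nonneg hcn.le, div_mul_cancel₀ _ hcn.ne']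
    have hpc : ‖p - c‖ = 1 - ε + ‖c‖ := by
      have : p - c = ((-(1 - ε) / ‖c‖) - 1) • c := by
        rw [hp, sub_smul, one_smul]
      rw [this, norm_smul, Real.norm_eq_abs]
      have hneg : (-(1 - ε) / ‖c‖) - 1 ≤ 0 := by
        have h1 : 0 ≤ (1 - ε) / ‖c‖ := div_nonneg (by linarith) hcn.le
        rw [neg_div]
        linarith
      rw [abs_of_nonpos hneg]
      field_simp
      ring
    have hsub : ball p (ε / 2) ⊆ A := by
      intro x hx
      have hxp : ‖x - p‖ < ε / 2 := by
        rw [← dist_eq_norm]; exact mem_ball.mp hx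
      constructor
      · rw [hB0, mem_ball_zero_iff]
        calc ‖x‖ = ‖x - p + p‖ := by rw [sub_add_cancel]
          _ ≤ ‖x - p‖ + ‖p‖ := norm_add_le _ _
          _ < ε / 2 + (1 - ε) := by rw [hpn]; linarith
          _ < 1 := by linarith
      · rw [hBc, mem_ball, dist_eq_norm]
        intro hlt
        have h1 : ‖p - c‖ ≤ ‖p - x‖ + ‖x - c‖ := by
          have := norm_sub_le_norm_sub_add_norm_sub p x c
          linarith [this]
        rw [hpc, ← norm_neg (p - x), neg_sub] at h1
        have : ‖c‖ / 4 ≤ ‖c‖ := by linarith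
        nlinarith [hxp, hlt, hε1, hcn]
    calc (0:ℝ≥0∞) < volume (ball p (ε / 2)) := measure_ball_pos _ _ (by positivity)
      _ ≤ volume A := measure_mono hsub
  -- a.e. nonzero
  have h0ae : ∀ᵐ x ∂(volume.restrict A), x ≠ (0 : V n) := by
    refine ae_restrict_of_ae ?_
    rw [ae_iff]
    have hset : {a : V n | ¬ a ≠ 0} = {0} := by ext a; simp
    rw [hset]
    exact measure_singleton _
  -- strict inequality
  have hlt : (∫ x in A, ‖c - x‖⁻¹) < ∫ x in A, g x := by
    have hpos : 0 < ∫ x in A, (g x - ‖c - x‖⁻¹) := by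
      have hptwise : ∀ x ∈ A, x ≠ 0 → 0 < g x - ‖c - x‖⁻¹ := by
        intro x hx hx0
        have h1 : ‖x‖ < 1 := mem_ball_zero_iff.mp hx.1
        have h2 : 0 < ‖x‖ := norm_pos_iff.mpr hx0
        have h3 : 1 < g x := by
          rw [hg]; simpa using (one_lt_inv_iff₀).mpr ⟨h2, h1⟩
        have h4 : ‖c - x‖⁻¹ ≤ 1 := by
          rw [inv_le_one_iff₀]; right; exact hA_bd x hx
        linarith
      have hInth : IntegrableOn (fun x => g x - ‖c - x‖⁻¹) A := by
        exact hInt2.sub hInt1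
      have hnn : 0 ≤ᵐ[volume.restrict A] fun x => g x - ‖c - x‖⁻¹ := by
        filter_upwards [ae_restrict_mem hAm, h0ae] with x hx hx0
        exact (hptwise x hx hx0).le
      rw [setIntegral_pos_iff_support_of_nonneg_ae hnn hInth]
      have hposA' : 0 < volume (A \ {0}) := by
        rwa [measure_diff_null (measure_singleton _)]
      refine lt_of_lt_of_le hposA' (measure_mono ?_)
      intro x hx
      exact ⟨ne_of_gt (hptwise x hx.1 (by simpa using hx.2)), hx.1⟩
    have hsub : (∫ x in A, (g x - ‖c - x‖⁻¹)) = (∫ x in A, g x) - ∫ x in A, ‖c - x‖⁻¹ :=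
      integral_sub hInt2 hInt1
    linarith
  exact hlt
end
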